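/- arXiv:2307.10446 — 3 statements merged into one kernel-verified Lean document; each statement's English description precedes it below -/
import Mathlib

section
/- Let ω : ℝ → ℝ be a continuous nonnegative function whose zero set has Lebesgue measure zero, and let b ∈ (0,2). Let V be the set of continuous functions f : ℝ → ℂ with ∫_ℝ |f(t)|^b ω(t) dt < ∞. Then the kernel S(f,g) = exp(−∫_ℝ |f(t) − g(t)|^b ω(t) dt) is positive definite on V. -/
/-!
Schoenberg: if `D` is symmetric with zero diagonal and `∑ vᵢ vⱼ Dᵢⱼ ≤ 0` whenever `∑ vᵢ = 0`
(conditionally negative definite), then `exp (-D)` is positive semidefinite, because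
`exp (-Dᵢⱼ) = eᵢ eⱼ exp Kᵢⱼ` with `K` positive semidefinite, and entrywise exponentials preserve
positive semidefiniteness by the Schur product theorem. So it suffices that
`Dᵢⱼ = ∫ |xᵢ(t) - xⱼ(t)| ^ b ω(t) dt` is conditionally negative definite; as `ω ≥ 0`, this reduces
to `|zᵢ - zⱼ| ^ b` for points `zᵢ ∈ ℂ`. With `a = b / 2 ∈ (0, 1)` and `λ = |z - w|²`,
`λ ^ a = c_a ∫₀^∞ (1 - exp (-λu)) u ^ (-1 - a) du`, and the Gaussian kernel `exp (-u |z - w|²)`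
is positive semidefinite.
-/

open MeasureTheory Complex Finset
open scoped ComplexOrder

theorem norm_sub_rpow_le {E : Type*} [SeminormedAddCommGroup E] {b : ℝ} (hb : 0 ≤ b) (z w : E) :
    ‖z - w‖ ^ b ≤ 2 ^ b * (‖z‖ ^ b + ‖w‖ ^ b) := by
  have hmax : ‖z - w‖ ≤ 2 * max ‖z‖ ‖w‖ := by
    linarith [norm_sub_le z w, le_max_left ‖z‖ ‖w‖, le_max_right ‖z‖ ‖w‖]
  calc ‖z - w‖ ^ b ≤ (2 * max ‖z‖ ‖w‖) ^ b := by gcongr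
    _ = 2 ^ b * max (‖z‖ ^ b) (‖w‖ ^ b) := by
      rw [Real.mul_rpow zero_le_two (by positivity),
        Real.rpow_max (norm_nonneg _) (norm_nonneg _) hb]
    _ ≤ 2 ^ b * (‖z‖ ^ b + ‖w‖ ^ b) := by
      gcongr
      exact max_le_add_of_nonneg (by positivity) (by positivity)

theorem MeasureTheory.Integrable.norm_sub_rpow_mul {α E : Type*} [MeasurableSpace α] {μ : Measure α}
    [NormedAddCommGroup E] {f g : α → E} {ω : α → ℝ} {b : ℝ} (hb : 0 ≤ b) (hω : 0 ≤ ω)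
    (hfm : AEStronglyMeasurable f μ) (hgm : AEStronglyMeasurable g μ)
    (hωm : AEStronglyMeasurable ω μ) (hf : Integrable (fun t => ‖f t‖ ^ b * ω t) μ)
    (hg : Integrable (fun t => ‖g t‖ ^ b * ω t) μ) :
    Integrable (fun t => ‖f t - g t‖ ^ b * ω t) μ := by
  refine ((hf.add hg).const_mul (2 ^ b)).mono'
    ((((hfm.sub hgm).norm.aemeasurable.pow_const b).aestronglyMeasurable).mul hωm)
    (ae_of_all _ fun t => ?_)
  rw [Real.norm_of_nonneg (mul_nonneg (by positivity) (hω t))]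
  calc ‖f t - g t‖ ^ b * ω t ≤ 2 ^ b * (‖f t‖ ^ b + ‖g t‖ ^ b) * ω t :=
        mul_le_mul_of_nonneg_right (norm_sub_rpow_le hb _ _) (hω t)
    _ = 2 ^ b * (‖f t‖ ^ b * ω t + ‖g t‖ ^ b * ω t) := by ring

/-- For `0 < a < 1` this is `x ^ a` times a positive constant (`rpowIntegral_eq_rpow_mul`):
it writes `x ^ a` as a positive mixture of the functions `x ↦ 1 - exp (-u x)`. -/
noncomputable def rpowIntegral (a x : ℝ) : ℝ :=
  ∫ u in Set.Ioi 0, (1 - Real.exp (-(x * u))) * u ^ (-1 - a)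

theorem integrableOn_rpowIntegral {a x : ℝ} (ha : a ∈ Set.Ioo 0 1) (hx : 0 ≤ x) :
    IntegrableOn (fun u => (1 - Real.exp (-(x * u))) * u ^ (-1 - a)) (Set.Ioi 0) := by
  have hmeas : AEStronglyMeasurable (fun u : ℝ => (1 - Real.exp (-(x * u))) * u ^ (-1 - a))
      (volume.restrict (Set.Ioi 0)) :=
    ((continuous_const.sub (by fun_prop)).continuousOn.mul
      (continuousOn_id.rpow_const fun u hu => Or.inl (ne_of_gt hu))).aestronglyMeasurable
      measurableSet_Ioi
  have hnorm {u : ℝ} (hu : 0 < u) :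
      ‖(1 - Real.exp (-(x * u))) * u ^ (-1 - a)‖ = (1 - Real.exp (-(x * u))) * u ^ (-1 - a) :=
    Real.norm_of_nonneg (mul_nonneg
      (sub_nonneg.mpr (Real.exp_le_one_iff.mpr (neg_nonpos.mpr (by positivity)))) (by positivity))
  rw [← Set.Ioc_union_Ioi_eq_Ioi zero_le_one]
  refine IntegrableOn.union ?_ ?_
  · have hint : IntegrableOn (fun u : ℝ => x * u ^ (-a)) (Set.Ioc 0 1) :=
      ((intervalIntegrable_iff_integrableOn_Ioc_of_le zero_le_one).mp
        (intervalIntegral.intervalIntegrable_rpow' (by linarith [ha.2]))).const_mul x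
    refine hint.mono' (hmeas.mono_set Set.Ioc_subset_Ioi_self) ?_
    filter_upwards [ae_restrict_mem measurableSet_Ioc] with u hu
    rw [hnorm hu.1, show u ^ (-a) = u * u ^ (-1 - a) by
      rw [← Real.rpow_one_add' hu.1.le (by linarith [ha.1])]; ring_nf, ← mul_assoc]
    exact mul_le_mul_of_nonneg_right (by linarith [Real.add_one_le_exp (-(x * u))])
      (Real.rpow_nonneg hu.1.le _)
  · have hint : IntegrableOn (fun u : ℝ => u ^ (-1 - a)) (Set.Ioi 1) :=
      integrableOn_Ioi_rpow_of_lt (by linarith [ha.1]) one_pos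
    refine hint.mono' (hmeas.mono_set (Set.Ioi_subset_Ioi zero_le_one)) ?_
    filter_upwards [ae_restrict_mem measurableSet_Ioi] with u hu
    rw [hnorm (zero_lt_one.trans hu)]
    have : 0 < Real.exp (-(x * u)) := Real.exp_pos _
    have : 0 ≤ u ^ (-1 - a) := Real.rpow_nonneg (zero_le_one.trans hu.le) _
    nlinarith

theorem rpowIntegral_eq_rpow_mul {a x : ℝ} (ha : a ≠ 0) (hx : 0 ≤ x) :
    rpowIntegral a x = x ^ a * rpowIntegral a 1 := by
  rcases hx.eq_or_lt with rfl | hx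
  · simp [rpowIntegral, Real.zero_rpow ha]
  have hsubst := integral_comp_mul_left_Ioi (fun u => (1 - Real.exp (-(1 * u))) * u ^ (-1 - a)) 0 hx
  rw [mul_zero, smul_eq_mul] at hsubst
  calc rpowIntegral a x
      = ∫ u in Set.Ioi 0, x ^ (1 + a) * ((1 - Real.exp (-(1 * (x * u)))) * (x * u) ^ (-1 - a)) := by
        refine setIntegral_congr_fun measurableSet_Ioi fun u (hu : 0 < u) => ?_
        have hx1 : x ^ (-1 - a) * x ^ (1 + a) = 1 := by rw [← Real.rpow_add hx]; simp
        rw [Real.mul_rpow hx.le hu.le, one_mul]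
        linear_combination (-((1 - Real.exp (-(x * u))) * u ^ (-1 - a))) * hx1
    _ = x ^ a * rpowIntegral a 1 := by
        rw [integral_const_mul, hsubst, rpowIntegral, ← mul_assoc, ← Real.rpow_neg_one,
          ← Real.rpow_add hx]
        ring_nf

theorem rpowIntegral_one_pos {a : ℝ} (ha : a ∈ Set.Ioo 0 1) : 0 < rpowIntegral a 1 := by
  have hpos (u : ℝ) (hu : 0 < u) : 0 < (1 - Real.exp (-(1 * u))) * u ^ (-1 - a) :=
    mul_pos (by simpa using hu) (Real.rpow_pos_of_pos hu _)
  rw [rpowIntegral, setIntegral_pos_iff_support_of_nonneg_ae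
    ((ae_restrict_mem measurableSet_Ioi).mono fun u hu => (hpos u hu).le)
    (integrableOn_rpowIntegral ha zero_le_one)]
  have hsupp : Set.Ioi 0 ⊆ Function.support fun u => (1 - Real.exp (-(1 * u))) * u ^ (-1 - a) :=
    fun u hu => (hpos u hu).ne'
  rw [Set.inter_eq_right.mpr hsupp]
  simp

namespace Matrix

variable {ι : Type*} [Fintype ι]

theorem PosSemidef.map_pow {𝕜 : Type*} [RCLike 𝕜] {A : Matrix ι ι 𝕜} (hA : A.PosSemidef) (n : ℕ) :
    (A.map (· ^ n)).PosSemidef := by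
  induction n with
  | zero =>
    convert posSemidef_vecMulVec_self_star (fun _ : ι => (1 : 𝕜)) using 1
    ext i j
    simp [vecMulVec_apply]
  | succ n ih =>
    convert ih.hadamard hA using 1
    ext i j
    simp [pow_succ]

theorem PosSemidef.map_exp {A : Matrix ι ι ℝ} (hA : A.PosSemidef) :
    (A.map Real.exp).PosSemidef := by
  refine .of_dotProduct_mulVec_nonneg (hA.isHermitian.map _ fun _ => rfl) fun x => ?_
  have hexp (t : ℝ) : HasSum (fun n => (n.factorial : ℝ)⁻¹ * t ^ n) (Real.exp t) := by
    simpa [Real.exp_eq_exp_ℝ] using NormedSpace.exp_series_hasSum_exp' (𝕂 := ℝ) t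
  have hsum : HasSum (fun n => (n.factorial : ℝ)⁻¹ * (star x ⬝ᵥ (A.map (· ^ n) *ᵥ x)))
      (star x ⬝ᵥ (A.map Real.exp *ᵥ x)) := by
    simp only [dotProduct, mulVec, map_apply, Finset.mul_sum]
    refine hasSum_sum fun i _ => hasSum_sum fun j _ => ?_
    rw [show star x i * (Real.exp (A i j) * x j) = star x i * x j * Real.exp (A i j) by ring]
    exact ((hexp (A i j)).mul_left (star x i * x j)).congr_fun fun n => by ring
  exact hsum.nonneg fun n =>
    mul_nonneg (by positivity) ((PosSemidef.map_pow hA n).dotProduct_mulVec_nonneg x)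

theorem PosSemidef.map_ofReal {𝕜 : Type*} [RCLike 𝕜] {A : Matrix ι ι ℝ} (hA : A.PosSemidef) :
    (A.map ((↑) : ℝ → 𝕜)).PosSemidef := by
  obtain ⟨m, v, rfl⟩ := posSemidef_iff_eq_sum_vecMulVec.mp hA
  have : (∑ r, vecMulVec (v r) (star (v r))).map ((↑) : ℝ → 𝕜)
      = ∑ r, vecMulVec (fun i => (v r i : 𝕜)) (star fun i => (v r i : 𝕜)) := by
    ext i j
    simp [sum_apply, vecMulVec_apply]
  rw [this]
  exact posSemidef_sum _ fun r _ => posSemidef_vecMulVec_self_star _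

theorem posSemidef_exp_neg_mul_norm_sub_sq {E : Type*} [NormedAddCommGroup E]
    [InnerProductSpace ℝ E] (x : ι → E) {u : ℝ} (hu : 0 ≤ u) :
    (of fun i j => Real.exp (-(u * ‖x i - x j‖ ^ 2))).PosSemidef := by
  classical
  -- `exp (-u ‖xᵢ - xⱼ‖²) = eᵢ * exp (2u ⟪xᵢ, xⱼ⟫) * eⱼ`
  set e : ι → ℝ := fun i => Real.exp (-(u * ‖x i‖ ^ 2))
  have hexp := ((posSemidef_gram ℝ x).smul (by positivity : 0 ≤ 2 * u)).map_exp
  convert hexp.conjTranspose_mul_mul_same (diagonal e) using 1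
  ext i j
  simp only [map_apply, of_apply, smul_apply, gram_apply, diagonal_conjTranspose, diagonal_mul,
    mul_diagonal, star_trivial, e, ← Real.exp_add, norm_sub_sq_real, smul_eq_mul]
  ring_nf

/-- Conditionally negative (semi)definite matrices, in Schoenberg's sense. -/
def CondNegSemidef (D : Matrix ι ι ℝ) : Prop :=
  ∀ v : ι → ℝ, ∑ i, v i = 0 → v ⬝ᵥ (D *ᵥ v) ≤ 0

theorem CondNegSemidef.smul {D : Matrix ι ι ℝ} (hD : D.CondNegSemidef) {c : ℝ} (hc : 0 ≤ c) :
    (c • D).CondNegSemidef := fun v hv => by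
  rw [smul_mulVec, dotProduct_smul, smul_eq_mul]
  exact mul_nonpos_of_nonneg_of_nonpos hc (hD v hv)

theorem PosSemidef.condNegSemidef_const_sub {A : Matrix ι ι ℝ} (hA : A.PosSemidef) (c : ℝ) :
    (of fun i j => c - A i j).CondNegSemidef := fun v hv => by
  have hconst : (of fun _ _ => c : Matrix ι ι ℝ) *ᵥ v = 0 := by
    ext i
    simp [mulVec, dotProduct, ← Finset.mul_sum, hv]
  have hsplit : (of fun i j => c - A i j) = of (fun _ _ => c) - A := by
    ext i j
    simp
  rw [hsplit, sub_mulVec, hconst, zero_sub, dotProduct_neg, neg_nonpos]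
  simpa using hA.dotProduct_mulVec_nonneg v

theorem condNegSemidef_integral {α : Type*} [MeasurableSpace α] {μ : Measure α}
    {K : α → Matrix ι ι ℝ} (hint : ∀ i j, Integrable (fun t => K t i j) μ)
    (hK : ∀ᵐ t ∂μ, (K t).CondNegSemidef) :
    (of fun i j => ∫ t, K t i j ∂μ).CondNegSemidef := fun v hv => by
  have hint' (i j : ι) : Integrable (fun t => v i * (K t i j * v j)) μ :=
    ((hint i j).mul_const _).const_mul _
  have hform : v ⬝ᵥ ((of fun i j => ∫ t, K t i j ∂μ) *ᵥ v) = ∫ t, v ⬝ᵥ (K t *ᵥ v) ∂μ := by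
    simp only [dotProduct, mulVec, of_apply, Finset.mul_sum]
    rw [integral_finsetSum _ fun i _ => integrable_finsetSum _ fun j _ => hint' i j]
    refine Finset.sum_congr rfl fun i _ => ?_
    rw [integral_finsetSum _ fun j _ => hint' i j]
    simp only [integral_const_mul, integral_mul_const]
  rw [hform]
  exact integral_nonpos_of_ae (hK.mono fun t ht => ht v hv)

theorem CondNegSemidef.posSemidef_basepoint [DecidableEq ι] {D : Matrix ι ι ℝ}
    (hD : D.CondNegSemidef) (hsymm : D.IsSymm) (i₀ : ι) (hi₀ : D i₀ i₀ = 0) :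
    (of fun i j => D i i₀ + D i₀ j - D i j).PosSemidef := by
  have hDij (i j : ι) : D j i = D i j := by simpa using congrFun (congrFun hsymm i) j
  refine .of_dotProduct_mulVec_nonneg ?_ fun w => ?_
  · ext i j
    simp only [hDij, conjTranspose_apply, of_apply, star_trivial, sub_left_inj]
    ring
  set s := ∑ i, w i
  -- `v` sums to zero and its `D`-form is minus the form of `w` against the matrix above
  set v : ι → ℝ := w - s • Pi.single i₀ 1
  have hv : ∑ i, v i = 0 := by simp [v, s, Finset.sum_sub_distrib, ← Finset.mul_sum]
  have key : v ⬝ᵥ (D *ᵥ v)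
      = -(star w ⬝ᵥ ((of fun i j => D i i₀ + D i₀ j - D i j) *ᵥ w)) := by
    simp only [v, mulVec_sub, mulVec_smul, mulVec_single_one, sub_dotProduct, dotProduct_sub,
      smul_dotProduct, dotProduct_smul, single_one_dotProduct, star_trivial]
    simp only [dotProduct, mulVec, smul_eq_mul, col, transpose_apply, hDij, hi₀, mul_zero,
      sub_zero, of_apply, s]
    simp only [add_mul, sub_mul, mul_add, mul_sub, Finset.sum_add_distrib, Finset.sum_sub_distrib,
      Finset.mul_sum, Finset.sum_mul]
    rw [Finset.sum_comm (f := fun x i => w x * (D i₀ i * w i))]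
    simp only [← Finset.sum_sub_distrib, ← Finset.sum_add_distrib, ← Finset.sum_neg_distrib]
    exact Finset.sum_congr rfl fun x _ => Finset.sum_congr rfl fun i _ => by ring
  linarith [hD _ hv]

theorem CondNegSemidef.posSemidef_exp_neg {D : Matrix ι ι ℝ} (hD : D.CondNegSemidef)
    (hsymm : D.IsSymm) (hdiag : ∀ i, D i i = 0) :
    (of fun i j => Real.exp (-D i j)).PosSemidef := by
  classical
  rcases isEmpty_or_nonempty ι with hι | ⟨⟨i₀⟩⟩
  · rw [Subsingleton.elim (of fun i j => Real.exp (-D i j)) 0]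
    exact .zero
  have hDij (i j : ι) : D j i = D i j := by simpa using congrFun (congrFun hsymm i) j
  -- `exp (-Dᵢⱼ) = eᵢ * exp (Dᵢᵢ₀ + Dᵢ₀ⱼ - Dᵢⱼ) * eⱼ`
  set e : ι → ℝ := fun i => Real.exp (-D i i₀)
  convert ((hD.posSemidef_basepoint hsymm i₀ (hdiag i₀)).map_exp).conjTranspose_mul_mul_same
    (diagonal e) using 1
  ext i j
  simp only [map_apply, of_apply, diagonal_conjTranspose, diagonal_mul, mul_diagonal,
    star_trivial, e, ← Real.exp_add, hDij j i₀]
  ring_nf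

theorem condNegSemidef_rpow_of_posSemidef_exp_neg {D : Matrix ι ι ℝ} (hD : ∀ i j, 0 ≤ D i j)
    (hexp : ∀ u, 0 ≤ u → (of fun i j => Real.exp (-(u * D i j))).PosSemidef)
    {a : ℝ} (ha : a ∈ Set.Ioo 0 1) :
    (of fun i j => D i j ^ a).CondNegSemidef := by
  set K : ℝ → Matrix ι ι ℝ := fun u => of fun i j => (1 - Real.exp (-(D i j * u))) * u ^ (-1 - a)
  have hK : ∀ᵐ u ∂(volume.restrict (Set.Ioi 0)), (K u).CondNegSemidef := by
    filter_upwards [ae_restrict_mem measurableSet_Ioi] with u (hu : 0 < u)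
    convert ((hexp u hu.le).condNegSemidef_const_sub 1).smul (Real.rpow_nonneg hu.le (-1 - a))
      using 1
    ext i j
    simp [K, mul_comm]
  have hint (i j : ι) : Integrable (fun u => K u i j) (volume.restrict (Set.Ioi 0)) :=
    integrableOn_rpowIntegral ha (hD i j)
  convert (condNegSemidef_integral hint hK).smul (inv_nonneg.mpr (rpowIntegral_one_pos ha).le)
    using 1
  ext i j
  simp only [smul_apply, of_apply, smul_eq_mul, K]
  rw [← rpowIntegral, rpowIntegral_eq_rpow_mul ha.1.ne' (hD i j), mul_comm (D i j ^ a),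
    inv_mul_cancel_left₀ (rpowIntegral_one_pos ha).ne']

theorem condNegSemidef_norm_sub_rpow {E : Type*} [NormedAddCommGroup E] [InnerProductSpace ℝ E]
    (x : ι → E) {b : ℝ} (hb : b ∈ Set.Ioo 0 2) :
    (of fun i j => ‖x i - x j‖ ^ b).CondNegSemidef := by
  have ha : b / 2 ∈ Set.Ioo (0 : ℝ) 1 := ⟨by linarith [hb.1], by linarith [hb.2]⟩
  have hentry (i j : ι) : ‖x i - x j‖ ^ b = (‖x i - x j‖ ^ 2) ^ (b / 2) := by
    rw [← Real.rpow_natCast, ← Real.rpow_mul (norm_nonneg _)]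
    ring_nf
  simpa only [of_apply, hentry] using condNegSemidef_rpow_of_posSemidef_exp_neg
    (D := fun i j => ‖x i - x j‖ ^ 2) (fun i j => sq_nonneg _)
    (fun u hu => posSemidef_exp_neg_mul_norm_sub_sq x hu) ha

theorem condNegSemidef_integral_norm_sub_rpow_mul {α E : Type*} [MeasurableSpace α] {μ : Measure α}
    [NormedAddCommGroup E] [InnerProductSpace ℝ E] (x : ι → α → E) {ω : α → ℝ} (hω : 0 ≤ ω)
    {b : ℝ} (hb : b ∈ Set.Ioo 0 2)
    (hint : ∀ i j, Integrable (fun t => ‖x i t - x j t‖ ^ b * ω t) μ) :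
    (of fun i j => ∫ t, ‖x i t - x j t‖ ^ b * ω t ∂μ).CondNegSemidef := by
  refine condNegSemidef_integral (K := fun t => of fun i j => ‖x i t - x j t‖ ^ b * ω t) hint
    (ae_of_all _ fun t => ?_)
  convert (condNegSemidef_norm_sub_rpow (fun i => x i t) hb).smul (hω t) using 1
  ext i j
  simp [mul_comm]

end Matrix

theorem exp_neg_weighted_integral_kernel_positive_definite_general
    (ω : ℝ → ℝ) (hω_cont : Continuous ω) (hω_nonneg : ∀ t, 0 ≤ ω t)
    (b : ℝ) (hb : b ∈ Set.Ioo (0 : ℝ) 2)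
    (V : Set (ℝ → ℂ))
    (hV : V = {f : ℝ → ℂ | Continuous f ∧
      Integrable (fun t => ‖f t‖ ^ b * ω t) volume}) :
    ∀ (N : ℕ) (x : Fin N → (ℝ → ℂ)), (∀ i, x i ∈ V) →
      ∀ c : Fin N → ℂ,
        (∑ j, ∑ i, (starRingEnd ℂ) (c i) *
          ((Real.exp (-∫ t, ‖x i t - x j t‖ ^ b * ω t) : ℝ) : ℂ) * c j).im
            = 0 ∧
        0 ≤ (∑ j, ∑ i, (starRingEnd ℂ) (c i) *
          ((Real.exp (-∫ t, ‖x i t - x j t‖ ^ b * ω t) : ℝ) : ℂ) * c j).re := by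
  intro N x hx c
  subst hV
  set D : Matrix (Fin N) (Fin N) ℝ := .of fun i j => ∫ t, ‖x i t - x j t‖ ^ b * ω t
  have hD : D.CondNegSemidef := Matrix.condNegSemidef_integral_norm_sub_rpow_mul x hω_nonneg hb
    fun i j => ((hx i).2).norm_sub_rpow_mul hb.1.le hω_nonneg (hx i).1.aestronglyMeasurable
      (hx j).1.aestronglyMeasurable hω_cont.aestronglyMeasurable (hx j).2
  have hsymm : D.IsSymm := Matrix.IsSymm.ext fun i j => by simp [D, norm_sub_rev]
  have hdiag (i : Fin N) : D i i = 0 := by simp [D, Real.zero_rpow hb.1.ne']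
  have hpos := ((hD.posSemidef_exp_neg hsymm hdiag).map_ofReal (𝕜 := ℂ)).dotProduct_mulVec_nonneg c
  have hform : dotProduct (star c)
      (((Matrix.of fun i j => Real.exp (-D i j)).map (RCLike.ofReal : ℝ → ℂ)).mulVec c)
      = ∑ j, ∑ i, (starRingEnd ℂ) (c i) * ((Real.exp (-D i j) : ℝ) : ℂ) * c j := by
    simp only [dotProduct, Matrix.mulVec, Matrix.map_apply, Matrix.of_apply, Finset.mul_sum,
      Pi.star_apply, Complex.star_def, mul_assoc]
    exact Finset.sum_comm
  rw [hform, Complex.nonneg_iff] at hpos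
  exact ⟨hpos.2.symm, hpos.1⟩

theorem exp_neg_weighted_integral_kernel_positive_definite
    (ω : ℝ → ℝ) (hω_cont : Continuous ω) (hω_nonneg : ∀ t, 0 ≤ ω t)
    (hω_zero : volume {t : ℝ | ω t = 0} = 0)
    (b : ℝ) (hb : b ∈ Set.Ioo (0 : ℝ) 2)
    (V : Set (ℝ → ℂ))
    (hV : V = {f : ℝ → ℂ | Continuous f ∧
      Integrable (fun t => ‖f t‖ ^ b * ω t) volume}) :
    ∀ (N : ℕ) (x : Fin N → (ℝ → ℂ)), (∀ i, x i ∈ V) →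
      ∀ c : Fin N → ℂ,
        (∑ j, ∑ i, (starRingEnd ℂ) (c i) *
          ((Real.exp (-∫ t, ‖x i t - x j t‖ ^ b * ω t) : ℝ) : ℂ) * c j).im
            = 0 ∧
        0 ≤ (∑ j, ∑ i, (starRingEnd ℂ) (c i) *
          ((Real.exp (-∫ t, ‖x i t - x j t‖ ^ b * ω t) : ℝ) : ℂ) * c j).re :=
  exp_neg_weighted_integral_kernel_positive_definite_general ω hω_cont hω_nonneg b hb V hV
end

section
/- Let a ∈ (0,1) and let S_a = {x ∈ ℂⁿ : ‖x‖ = (1/2)^{1/a}} be the sphere of radius (1/2)^{1/a} in ℂⁿ with the Euclidean norm. Then the kernel S(x,y) = 1 − ‖x−y‖^a is positive definite on S_a. -/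
/-!
Write `a = 2b` with `0 < b < 1`. Substituting `s ↦ t s` shows
`t ^ b = C⁻¹ ∫₀^∞ (1 - exp (-t s)) s ^ (-b - 1) ds` with `0 < C < ∞`, so
`‖x‖^a + ‖y‖^a - ‖x - y‖^a` is a positive mixture over `s > 0` of the kernels
`1 - exp (-s‖x‖²) - exp (-s‖y‖²) + exp (-s‖x - y‖²)`. Since
`exp (-s‖x - y‖²) = exp (-s‖x‖²) exp (-s‖y‖²) exp (2s⟪x, y⟫)` and `exp (2s⟪x, y⟫) - 1` is a
positive series of Schur powers of the Gram kernel, each of these kernels is positive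
semidefinite: its quadratic form is at least `(∑ dᵢ - ∑ dᵢ exp (-s‖xᵢ‖²))²`. On the sphere
`‖x‖^a = 1/2`, so `1 - ‖x - y‖^a` is this kernel; being real and symmetric, it is positive
semidefinite for complex coefficients as well.
-/

open Finset Complex MeasureTheory Set
open scoped RealInnerProductSpace ComplexOrder ComplexConjugate

section RpowIntegral

variable {b : ℝ}

theorem integrableOn_one_sub_exp_neg_mul_rpow (hb0 : 0 < b) (hb1 : b < 1) {t : ℝ} (ht : 0 ≤ t) :
    IntegrableOn (fun s : ℝ => (1 - Real.exp (-(t * s))) * s ^ (-b - 1)) (Ioi 0) := by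
  have hmeas : ∀ S : Set ℝ, AEStronglyMeasurable
      (fun s : ℝ => (1 - Real.exp (-(t * s))) * s ^ (-b - 1)) (volume.restrict S) :=
    fun S => (by fun_prop : Measurable _).aestronglyMeasurable
  have hbound : ∀ s > 0, 0 ≤ 1 - Real.exp (-(t * s)) ∧ 1 - Real.exp (-(t * s)) ≤ min (t * s) 1 := by
    intro s hs
    have h1 := Real.add_one_le_exp (-(t * s))
    have h2 : Real.exp (-(t * s)) ≤ 1 := Real.exp_le_one_iff.mpr (by nlinarith)
    exact ⟨by linarith, le_min (by linarith) (by linarith [Real.exp_pos (-(t * s))])⟩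
  have hnear : IntegrableOn (fun s : ℝ => (1 - Real.exp (-(t * s))) * s ^ (-b - 1)) (Ioc 0 1) := by
    have hdom : IntegrableOn (fun s : ℝ => t * s ^ (-b)) (Ioc 0 1) :=
      (((intervalIntegral.integrableOn_Ioo_rpow_iff one_pos).mpr (by linarith)).congr_set_ae
        Ioo_ae_eq_Ioc.symm).const_mul t
    refine hdom.mono' (hmeas _) (ae_restrict_of_forall_mem measurableSet_Ioc fun s hs => ?_)
    obtain ⟨hlo, hhi⟩ := hbound s hs.1
    have hpos := Real.rpow_pos_of_pos hs.1 (-b - 1)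
    calc ‖(1 - Real.exp (-(t * s))) * s ^ (-b - 1)‖ ≤ t * s * s ^ (-b - 1) := by
          rw [Real.norm_of_nonneg (mul_nonneg hlo hpos.le)]
          exact mul_le_mul_of_nonneg_right (hhi.trans (min_le_left _ _)) hpos.le
      _ = t * s ^ (-b) := by
          rw [mul_assoc, ← Real.rpow_one_add' hs.1.le (by simpa using hb0.ne')]
          ring_nf
  have hfar : IntegrableOn (fun s : ℝ => (1 - Real.exp (-(t * s))) * s ^ (-b - 1)) (Ioi 1) := by
    refine (integrableOn_Ioi_rpow_of_lt (a := -b - 1) (by linarith) one_pos).mono' (hmeas _)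
      (ae_restrict_of_forall_mem measurableSet_Ioi fun s hs => ?_)
    obtain ⟨hlo, hhi⟩ := hbound s (one_pos.trans hs)
    have hpos := Real.rpow_pos_of_pos (one_pos.trans hs) (-b - 1)
    rw [Real.norm_of_nonneg (mul_nonneg hlo hpos.le)]
    exact mul_le_of_le_one_left hpos.le (hhi.trans (min_le_right _ _))
  rw [← Ioc_union_Ioi_eq_Ioi zero_le_one]
  exact hnear.union hfar

theorem integral_one_sub_exp_neg_mul_rpow (hb : b ≠ 0) {t : ℝ} (ht : 0 ≤ t) :
    ∫ s in Ioi 0, (1 - Real.exp (-(t * s))) * s ^ (-b - 1) =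
      t ^ b * ∫ s in Ioi 0, (1 - Real.exp (-s)) * s ^ (-b - 1) := by
  rcases ht.eq_or_lt with rfl | ht
  · simp [Real.zero_rpow hb]
  have hscale : ∀ s ∈ Ioi (0 : ℝ), (1 - Real.exp (-(t * s))) * s ^ (-b - 1) =
      t ^ (b + 1) * ((1 - Real.exp (-(t * s))) * (t * s) ^ (-b - 1)) := fun s hs => by
    have hcancel : t ^ (b + 1) * t ^ (-b - 1) = 1 := by
      rw [← Real.rpow_add ht]; norm_num
    rw [Real.mul_rpow ht.le (le_of_lt hs)]
    linear_combination (-(1 - Real.exp (-(t * s))) * s ^ (-b - 1)) * hcancel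
  rw [setIntegral_congr_fun measurableSet_Ioi hscale, integral_const_mul,
    integral_comp_mul_left_Ioi (fun u => (1 - Real.exp (-u)) * u ^ (-b - 1)) 0 ht, mul_zero,
    smul_eq_mul, ← mul_assoc, Real.rpow_add_one ht.ne']
  field_simp

theorem integral_one_sub_exp_neg_rpow_pos (hb0 : 0 < b) (hb1 : b < 1) :
    0 < ∫ s in Ioi 0, (1 - Real.exp (-s)) * s ^ (-b - 1) := by
  have hpos : ∀ s ∈ Ioi (0 : ℝ), 0 < (1 - Real.exp (-s)) * s ^ (-b - 1) := fun s hs =>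
    mul_pos (sub_pos.mpr (Real.exp_lt_one_iff.mpr (neg_lt_zero.mpr hs)))
      (Real.rpow_pos_of_pos hs _)
  have hint := integrableOn_one_sub_exp_neg_mul_rpow hb0 hb1 zero_le_one
  simp only [one_mul] at hint
  rw [setIntegral_pos_iff_support_of_nonneg_ae
    (ae_restrict_of_forall_mem measurableSet_Ioi fun s hs => (hpos s hs).le) hint]
  calc (0 : ENNReal) < volume (Ioi (0 : ℝ)) := by simp
    _ ≤ _ := measure_mono (subset_inter (fun s hs => (hpos s hs).ne') subset_rfl)

end RpowIntegral

section Kernels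

variable {ι E : Type*} [Fintype ι] [NormedAddCommGroup E] [InnerProductSpace ℝ E]

theorem Matrix.PosSemidef.sum_mul_mul_nonneg {M : Matrix ι ι ℝ} (hM : M.PosSemidef)
    (d : ι → ℝ) : 0 ≤ ∑ i, ∑ j, d i * d j * M i j := by
  have := hM.dotProduct_mulVec_nonneg d
  simpa [dotProduct, Matrix.mulVec, mul_sum, mul_assoc, mul_comm, mul_left_comm] using this

theorem Matrix.posSemidef_inner_pow (x : ι → E) (m : ℕ) :
    (Matrix.of fun i j => ⟪x i, x j⟫ ^ m).PosSemidef := by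
  induction m with
  | zero =>
    have h : (Matrix.of fun i j => ⟪x i, x j⟫ ^ 0) = Matrix.gram ℝ fun _ : ι => (1 : ℝ) := by
      ext i j; simp
    exact h ▸ Matrix.posSemidef_gram ℝ _
  | succ m ih =>
    have h : (Matrix.of fun i j => ⟪x i, x j⟫ ^ (m + 1)) =
        (Matrix.of fun i j => ⟪x i, x j⟫ ^ m).hadamard (Matrix.gram ℝ x) := by
      ext i j; simp [pow_succ]
    exact h ▸ ih.hadamard (Matrix.posSemidef_gram ℝ x)

theorem sq_sum_le_sum_mul_mul_exp_inner (x : ι → E) (d : ι → ℝ) {t : ℝ} (ht : 0 ≤ t) :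
    (∑ i, d i) ^ 2 ≤ ∑ i, ∑ j, d i * d j * Real.exp (t * ⟪x i, x j⟫) := by
  have hsum : HasSum (fun m : ℕ => ∑ i, ∑ j, d i * d j * ((t * ⟪x i, x j⟫) ^ m / m.factorial))
      (∑ i, ∑ j, d i * d j * Real.exp (t * ⟪x i, x j⟫)) := by
    refine hasSum_sum fun i _ => hasSum_sum fun j _ => HasSum.mul_left _ ?_
    rw [Real.exp_eq_exp_ℝ]
    exact NormedSpace.expSeries_div_hasSum_exp _
  have hterm : ∀ m : ℕ, ∑ i, ∑ j, d i * d j * ((t * ⟪x i, x j⟫) ^ m / m.factorial)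
      = t ^ m / m.factorial * ∑ i, ∑ j, d i * d j * ⟪x i, x j⟫ ^ m := by
    intro m
    simp only [mul_sum, mul_pow]
    exact sum_congr rfl fun i _ => sum_congr rfl fun j _ => by ring
  calc (∑ i, d i) ^ 2 = ∑ i, ∑ j, d i * d j * ((t * ⟪x i, x j⟫) ^ 0 / (0 : ℕ).factorial) := by
        simp [sq, sum_mul_sum]
    _ ≤ _ := le_hasSum hsum 0 fun m _ => by
        rw [hterm]
        exact mul_nonneg (by positivity) ((Matrix.posSemidef_inner_pow x m).sum_mul_mul_nonneg d)

theorem sum_mul_mul_one_sub_exp_sub_exp_add_exp_nonneg (x : ι → E) (d : ι → ℝ) {s : ℝ}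
    (hs : 0 ≤ s) :
    0 ≤ ∑ i, ∑ j, d i * d j * (1 - Real.exp (-(‖x i‖ ^ 2 * s)) - Real.exp (-(‖x j‖ ^ 2 * s))
      + Real.exp (-(‖x i - x j‖ ^ 2 * s))) := by
  set u : ι → ℝ := fun i => Real.exp (-(‖x i‖ ^ 2 * s))
  have hsplit : ∀ i j, Real.exp (-(‖x i - x j‖ ^ 2 * s)) =
      u i * u j * Real.exp (2 * s * ⟪x i, x j⟫) := fun i j => by
    simp only [u, ← Real.exp_add, norm_sub_sq_real]
    ring_nf
  have hexp := sq_sum_le_sum_mul_mul_exp_inner x (fun i => d i * u i) (by positivity : 0 ≤ 2 * s)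
  have hexpand : ∑ i, ∑ j, d i * d j * (1 - u i - u j + Real.exp (-(‖x i - x j‖ ^ 2 * s))) =
      (∑ i, (d i - d i * u i)) ^ 2 + (∑ i, ∑ j, d i * u i * (d j * u j) *
        Real.exp (2 * s * ⟪x i, x j⟫) - (∑ i, d i * u i) ^ 2) := by
    simp only [hsplit]
    simp only [sq, sum_mul_sum, ← sum_sub_distrib, ← sum_add_distrib]
    exact sum_congr rfl fun i _ => sum_congr rfl fun j _ => by ring
  rw [hexpand]
  nlinarith [sq_nonneg (∑ i, (d i - d i * u i))]

theorem sum_conj_mul_ofReal_mul_nonneg {K : ι → ι → ℝ} (hK : ∀ i j, K i j = K j i)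
    (hpos : ∀ d : ι → ℝ, 0 ≤ ∑ i, ∑ j, d i * d j * K i j) (c : ι → ℂ) :
    0 ≤ ∑ j, ∑ i, conj (c i) * (K i j : ℂ) * c j := by
  set S := ∑ j, ∑ i, conj (c i) * (K i j : ℂ) * c j
  have hself : conj S = S := by
    simp only [S, map_sum, map_mul, conj_conj, conj_ofReal]
    rw [sum_comm]
    exact sum_congr rfl fun j _ => sum_congr rfl fun i _ => by rw [hK]; ring
  have hre : S.re = ∑ i, ∑ j, (c i).re * (c j).re * K i j
      + ∑ i, ∑ j, (c i).im * (c j).im * K i j := by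
    simp only [S, re_sum, ← sum_add_distrib]
    rw [sum_comm]
    exact sum_congr rfl fun i _ => sum_congr rfl fun j _ => by
      simp only [mul_re, mul_im, conj_re, conj_im, ofReal_re, ofReal_im]; ring
  rw [Complex.nonneg_iff, hre, eq_comm, ← conj_eq_iff_im]
  exact ⟨add_nonneg (hpos _) (hpos _), hself⟩

theorem sum_mul_mul_norm_rpow_add_norm_rpow_sub_norm_sub_rpow_nonneg {a : ℝ} (ha0 : 0 < a)
    (ha2 : a < 2) (x : ι → E) (d : ι → ℝ) :
    0 ≤ ∑ i, ∑ j, d i * d j * (‖x i‖ ^ a + ‖x j‖ ^ a - ‖x i - x j‖ ^ a) := by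
  obtain ⟨b, rfl⟩ : ∃ b, a = 2 * b := ⟨a / 2, by ring⟩
  have hb0 : 0 < b := by linarith
  have hb1 : b < 1 := by linarith
  set C := ∫ s in Ioi 0, (1 - Real.exp (-s)) * s ^ (-b - 1)
  set φ : ℝ → ℝ → ℝ := fun t s => (1 - Real.exp (-(t * s))) * s ^ (-b - 1) with hφ
  have hrepr : ∀ y : E, ‖y‖ ^ (2 * b) * C = ∫ s in Ioi 0, φ (‖y‖ ^ 2) s := fun y => by
    rw [hφ, integral_one_sub_exp_neg_mul_rpow hb0.ne' (by positivity),
      Real.rpow_mul (norm_nonneg y), Real.rpow_two]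
  have hint : ∀ y : E, IntegrableOn (φ (‖y‖ ^ 2)) (Ioi 0) := fun y =>
    integrableOn_one_sub_exp_neg_mul_rpow hb0 hb1 (by positivity)
  set k : ι → ι → ℝ → ℝ := fun i j s =>
    d i * d j * (φ (‖x i‖ ^ 2) s + φ (‖x j‖ ^ 2) s - φ (‖x i - x j‖ ^ 2) s) with hk
  have hkint : ∀ i j, IntegrableOn (k i j) (Ioi 0) := fun i j =>
    (((hint _).add (hint _)).sub (hint _)).const_mul _
  have hkrepr : ∀ i j, d i * d j * (‖x i‖ ^ (2 * b) + ‖x j‖ ^ (2 * b) - ‖x i - x j‖ ^ (2 * b)) * C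
      = ∫ s in Ioi 0, k i j s := fun i j => by
    have hsum : IntegrableOn (fun s => φ (‖x i‖ ^ 2) s + φ (‖x j‖ ^ 2) s) (Ioi 0) :=
      (hint _).add (hint _)
    rw [hk, integral_const_mul, integral_sub hsum (hint _),
      integral_add (hint _) (hint _), ← hrepr, ← hrepr, ← hrepr]
    ring
  have hkpos : ∀ s ∈ Ioi (0 : ℝ), 0 ≤ ∑ i, ∑ j, k i j s := fun s hs => by
    have hfactor : ∑ i, ∑ j, k i j s = s ^ (-b - 1) * ∑ i, ∑ j, d i * d j *
        (1 - Real.exp (-(‖x i‖ ^ 2 * s)) - Real.exp (-(‖x j‖ ^ 2 * s))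
          + Real.exp (-(‖x i - x j‖ ^ 2 * s))) := by
      simp only [hk, hφ, mul_sum]
      exact sum_congr rfl fun i _ => sum_congr rfl fun j _ => by ring
    rw [hfactor]
    exact mul_nonneg (Real.rpow_nonneg (le_of_lt hs) _)
      (sum_mul_mul_one_sub_exp_sub_exp_add_exp_nonneg x d (le_of_lt hs))
  refine nonneg_of_mul_nonneg_left ?_ (integral_one_sub_exp_neg_rpow_pos hb0 hb1)
  calc 0 ≤ ∫ s in Ioi 0, ∑ i, ∑ j, k i j s := setIntegral_nonneg measurableSet_Ioi hkpos
    _ = _ := by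
      rw [integral_finsetSum _ fun i _ => integrable_finsetSum _ fun j _ => hkint i j, sum_mul]
      refine sum_congr rfl fun i _ => ?_
      rw [integral_finsetSum _ fun j _ => hkint i j, sum_mul]
      exact sum_congr rfl fun j _ => (hkrepr i j).symm

end Kernels

theorem one_sub_dist_rpow_positive_definite_on_sphere (n : ℕ) (a : ℝ)
    (ha : a ∈ Set.Ioo (0 : ℝ) 1) :
    ∀ (N : ℕ) (x : Fin N → EuclideanSpace ℂ (Fin n)),
      (∀ i, ‖x i‖ = (1 / 2 : ℝ) ^ (1 / a)) →
      ∀ c : Fin N → ℂ,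
        (∑ j, ∑ i, (starRingEnd ℂ) (c i) *
          ((1 - ‖x i - x j‖ ^ a : ℝ) : ℂ) * c j).im = 0 ∧
        0 ≤ (∑ j, ∑ i, (starRingEnd ℂ) (c i) *
          ((1 - ‖x i - x j‖ ^ a : ℝ) : ℂ) * c j).re := by
  intro N x hx c
  -- `re ⟪x, y⟫_ℂ` is not a global instance (it would form a diamond), but induces the same norm.
  let _ : InnerProductSpace ℝ (EuclideanSpace ℂ (Fin n)) := InnerProductSpace.complexToReal
  have hnorm : ∀ i, ‖x i‖ ^ a = 1 / 2 := fun i => by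
    rw [hx i, one_div a, Real.rpow_inv_rpow (by norm_num) ha.1.ne']
  have hpos := sum_conj_mul_ofReal_mul_nonneg (K := fun i j => 1 - ‖x i - x j‖ ^ a)
    (fun i j => by rw [norm_sub_rev]) (fun d => by
      have := sum_mul_mul_norm_rpow_add_norm_rpow_sub_norm_sub_rpow_nonneg ha.1
        (by linarith [ha.2]) x d
      simpa only [hnorm, add_halves] using this) c
  obtain ⟨hre, him⟩ := Complex.nonneg_iff.mp hpos
  exact ⟨him.symm, hre⟩
end

section
/- On ℂⁿ with the Euclidean norm, the kernel S defined by S(x,y) = (‖x‖ + ‖y‖ − ‖x−y‖)/(‖x‖ + ‖y‖) when x ≠ 0 or y ≠ 0, and S(0,0) = 0, is positive definite on ℂⁿ. -/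
open Finset Complex
open scoped Classical

/-- A (real-valued) kernel `k : X → X → ℝ` is positive definite if every finite quadratic
form `∑_{j,i} conj (c i) * k (x i) (x j) * c j` with complex coefficients is a nonnegative
real number. -/
def IsPositiveDefiniteKernelR {X : Type*} (k : X → X → ℝ) : Prop :=
  ∀ (N : ℕ) (x : Fin N → X) (c : Fin N → ℂ),
    (∑ j, ∑ i, (starRingEnd ℂ) (c i) * (k (x i) (x j) : ℂ) * c j).im = 0 ∧
    0 ≤ (∑ j, ∑ i, (starRingEnd ℂ) (c i) * (k (x i) (x j) : ℂ) * c j).re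

/-!
On `ℝ`, `|a| + |b| - |a - b|` is twice the length of the overlap of the intervals between `0`
and `a` and between `0` and `b`, so it is a Gram kernel of indicator functions in `L²(ℝ)`.
For a standard Gaussian vector `g`, `⟪x, g⟫` has law `N(0, ‖x‖²)`, so averaging the pullbacks
of this kernel along `x ↦ ⟪x, g⟫` gives `‖x‖ + ‖y‖ - ‖x - y‖` times `𝔼|N(0, 1)| > 0`.
Writing `1 / (‖x‖ + ‖y‖) = ∫₀^∞ e^{-‖x‖t} e^{-‖y‖t} dt` exhibits the normalized kernel as an
integral of positive semidefinite kernels. Complex coefficients reduce to real ones by splitting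
them into real and imaginary parts; the symmetry of the kernel kills the imaginary part of the
quadratic form.
-/

open MeasureTheory ProbabilityTheory Real
open scoped RealInnerProductSpace

def IsPosSemidefKernel {X : Type*} (k : X → X → ℝ) : Prop :=
  ∀ (N : ℕ) (x : Fin N → X) (d : Fin N → ℝ), 0 ≤ ∑ j, ∑ i, d i * d j * k (x i) (x j)

section Kernel

variable {X : Type*}

lemma isPosSemidefKernel_apply_mul_apply (f : X → ℝ) : IsPosSemidefKernel fun x y => f x * f y := by
  intro N x d
  have h : ∑ j, ∑ i, d i * d j * (f (x i) * f (x j)) = (∑ i, d i * f (x i)) ^ 2 := by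
    rw [sq, Finset.sum_mul_sum, Finset.sum_comm]
    exact Finset.sum_congr rfl fun _ _ => Finset.sum_congr rfl fun _ _ => by ring
  exact h ▸ sq_nonneg _

lemma isPosSemidefKernel_integral {α : Type*} [MeasurableSpace α] {μ : Measure α}
    {k : α → X → X → ℝ} (hk : ∀ a, IsPosSemidefKernel (k a))
    (hint : ∀ x y, Integrable (fun a => k a x y) μ) :
    IsPosSemidefKernel fun x y => ∫ a, k a x y ∂μ := by
  intro N x d
  have hint' : ∀ i j, Integrable (fun a => d i * d j * k a (x i) (x j)) μ :=
    fun i j => (hint _ _).const_mul _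
  calc 0 ≤ ∫ a, ∑ j, ∑ i, d i * d j * k a (x i) (x j) ∂μ := integral_nonneg fun a => hk a N x d
    _ = _ := by
      rw [integral_finsetSum _ fun j _ => integrable_finsetSum _ fun i _ => hint' i j]
      refine Finset.sum_congr rfl fun j _ => ?_
      rw [integral_finsetSum _ fun i _ => hint' i j]
      simp_rw [integral_const_mul]

namespace IsPosSemidefKernel

variable {k : X → X → ℝ}

lemma mul_mul (hk : IsPosSemidefKernel k) (f : X → ℝ) :
    IsPosSemidefKernel fun x y => f x * f y * k x y := by
  intro N x d
  refine (hk N x fun i => d i * f (x i)).trans_eq ?_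
  exact Finset.sum_congr rfl fun _ _ => Finset.sum_congr rfl fun _ _ => by ring

lemma const_mul (hk : IsPosSemidefKernel k) {c : ℝ} (hc : 0 ≤ c) :
    IsPosSemidefKernel fun x y => c * k x y := by
  intro N x d
  have h := mul_nonneg hc (hk N x d)
  simp only [Finset.mul_sum] at h
  simpa only [mul_left_comm c] using h

lemma comp {Y : Type*} (hk : IsPosSemidefKernel k) (f : Y → X) :
    IsPosSemidefKernel fun x y => k (f x) (f y) :=
  fun N x d => hk N (f ∘ x) d

lemma div_add (hk : IsPosSemidefKernel k) {w : X → ℝ} (hw : ∀ x, 0 ≤ w x)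
    (hk0 : ∀ x y, w x + w y = 0 → k x y = 0) :
    IsPosSemidefKernel fun x y => k x y / (w x + w y) := by
  have hexp : ∀ t x y, rexp (-w x * t) * rexp (-w y * t) = rexp (-(w x + w y) * t) := by
    intro t x y
    rw [← Real.exp_add]
    ring_nf
  have key : ∀ x y,
      IntegrableOn (fun t => rexp (-w x * t) * rexp (-w y * t) * k x y) (Set.Ioi 0) ∧
      k x y / (w x + w y) = ∫ t in Set.Ioi 0, rexp (-w x * t) * rexp (-w y * t) * k x y := by
    intro x y
    simp_rw [hexp]
    rcases (add_nonneg (hw x) (hw y)).eq_or_lt with h | h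
    · simp [hk0 x y h.symm]
    · refine ⟨(integrableOn_exp_mul_Ioi (neg_neg_of_pos h) 0).mul_const _, ?_⟩
      rw [integral_mul_const, integral_exp_mul_Ioi (neg_neg_of_pos h)]
      field_simp
      simp
  simp_rw [fun x y => (key x y).2]
  exact isPosSemidefKernel_integral (fun t => hk.mul_mul fun x => rexp (-w x * t))
    fun x y => (key x y).1

lemma isPositiveDefiniteKernelR (hk : IsPosSemidefKernel k) (hsymm : ∀ x y, k x y = k y x) :
    IsPositiveDefiniteKernelR k := by
  intro N x c
  have hre : ∀ i j, (starRingEnd ℂ (c i) * (k (x i) (x j) : ℂ) * c j).re =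
      (c i).re * (c j).re * k (x i) (x j) + (c i).im * (c j).im * k (x i) (x j) := by
    intro i j
    simp only [mul_re, mul_im, conj_re, conj_im, ofReal_re, ofReal_im]
    ring
  have him : ∀ i j, (starRingEnd ℂ (c i) * (k (x i) (x j) : ℂ) * c j).im =
      ((c i).re * (c j).im - (c i).im * (c j).re) * k (x i) (x j) := by
    intro i j
    simp only [mul_re, mul_im, conj_re, conj_im, ofReal_re, ofReal_im]
    ring
  constructor
  · simp only [im_sum, him]
    set f := fun i j => ((c i).re * (c j).im - (c i).im * (c j).re) * k (x i) (x j)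
    have hf : ∀ i j, f j i = -f i j := fun i j => by simp only [f, hsymm (x j)]; ring
    have hanti : ∑ j, ∑ i, f i j = -∑ j, ∑ i, f i j := calc
      _ = ∑ i, ∑ j, f i j := Finset.sum_comm
      _ = ∑ i, ∑ j, -f j i := Finset.sum_congr rfl fun i _ => Finset.sum_congr rfl fun j _ => hf j i
      _ = _ := by simp only [Finset.sum_neg_distrib]
    linarith
  · simp only [re_sum, hre, Finset.sum_add_distrib]
    exact add_nonneg (hk N x _) (hk N x _)

end IsPosSemidefKernel

lemma isPosSemidefKernel_measureReal_inter {α : Type*} [MeasurableSpace α] (μ : Measure α)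
    (A : X → Set α) (hA : ∀ x, MeasurableSet (A x)) (hμA : ∀ x, μ (A x) ≠ ⊤) :
    IsPosSemidefKernel fun x y => μ.real (A x ∩ A y) := by
  have hprod : ∀ x y, (A x ∩ A y).indicator (1 : α → ℝ) =
      fun a => (A x).indicator 1 a * (A y).indicator 1 a := fun x y => Set.inter_indicator_one
  have h : (fun x y => μ.real (A x ∩ A y)) =
      fun x y => ∫ a, (A x).indicator 1 a * (A y).indicator 1 a ∂μ := by
    ext x y
    rw [← integral_indicator_one ((hA x).inter (hA y)), hprod]
  rw [h]
  refine isPosSemidefKernel_integral (fun a => isPosSemidefKernel_apply_mul_apply _) fun x y => ?_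
  rw [← hprod]
  exact (integrableOn_const (measure_inter_lt_top_of_left_ne_top (hμA x)).ne).integrable_indicator
    ((hA x).inter (hA y))

end Kernel

lemma abs_add_abs_sub_abs_sub_eq_two_mul_volumeReal (a b : ℝ) :
    |a| + |b| - |a - b| = 2 * volume.real (Set.uIoc 0 a ∩ Set.uIoc 0 b) := by
  rcases le_total 0 a with ha | ha <;> rcases le_total 0 b with hb | hb <;>
    rcases le_total a b with hab | hab <;>
    simp [Set.uIoc_of_le, Set.uIoc_of_ge, Set.Ioc_inter_Ioc, abs_of_nonneg, abs_of_nonpos, *] <;>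
    linarith

lemma isPosSemidefKernel_abs_add_abs_sub_abs_sub :
    IsPosSemidefKernel fun a b : ℝ => |a| + |b| - |a - b| := by
  simp_rw [abs_add_abs_sub_abs_sub_eq_two_mul_volumeReal]
  exact (isPosSemidefKernel_measureReal_inter volume _ (fun _ => measurableSet_uIoc)
    fun _ => measure_Ioc_lt_top.ne).const_mul zero_le_two

lemma integral_abs_gaussianReal_pos : 0 < ∫ t, |t| ∂gaussianReal 0 1 := by
  have hint : Integrable (fun t : ℝ => |t|) (gaussianReal 0 1) :=
    (memLp_one_iff_integrable.1 (memLp_id_gaussianReal 1)).abs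
  rw [integral_pos_iff_support_of_nonneg (fun _ => abs_nonneg _) hint]
  have : NullSingletonClass (gaussianReal 0 1) := nullSingletonClass_gaussianReal one_ne_zero
  have hsupp : (Function.support fun t : ℝ => |t|) = {0}ᶜ := by ext; simp
  rw [hsupp, (prob_compl_eq_one_iff (measurableSet_singleton 0)).2 (measure_singleton 0)]
  exact one_pos

section InnerProductSpace

variable {E : Type*} [NormedAddCommGroup E] [InnerProductSpace ℝ E] [FiniteDimensional ℝ E]

lemma integrable_abs_inner_stdGaussian [MeasurableSpace E] [BorelSpace E] (u : E) :
    Integrable (fun g => |⟪u, g⟫|) (stdGaussian E) :=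
  (IsGaussian.integrable_dual _ (innerSL ℝ u)).abs

lemma integral_abs_inner_stdGaussian [MeasurableSpace E] [BorelSpace E] (u : E) :
    ∫ g, |⟪u, g⟫| ∂stdGaussian E = ‖u‖ * ∫ t, |t| ∂gaussianReal 0 1 := by
  have hmap : (stdGaussian E).map (innerSL ℝ u) = (gaussianReal 0 1).map (‖u‖ * ·) := by
    rw [IsGaussian.map_eq_gaussianReal, integral_strongDual_stdGaussian, variance_dual_stdGaussian,
      gaussianReal_map_const_mul, innerSL_apply_norm]
    congr 1
    · simp
    · ext; simp
  calc ∫ g, |⟪u, g⟫| ∂stdGaussian E = ∫ t, |t| ∂(stdGaussian E).map (innerSL ℝ u) := by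
        rw [integral_map (by fun_prop) (by fun_prop)]; rfl
    _ = ∫ t, |‖u‖ * t| ∂gaussianReal 0 1 := by
        rw [hmap, integral_map (by fun_prop) (by fun_prop)]
    _ = ‖u‖ * ∫ t, |t| ∂gaussianReal 0 1 := by
        simp_rw [abs_mul, abs_norm, integral_const_mul]

lemma isPosSemidefKernel_norm_add_norm_sub_norm_sub :
    IsPosSemidefKernel fun x y : E => ‖x‖ + ‖y‖ - ‖x - y‖ := by
  let _ : MeasurableSpace E := borel E
  have : BorelSpace E := ⟨rfl⟩
  have hm := integral_abs_gaussianReal_pos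
  have hint := integrable_abs_inner_stdGaussian (E := E)
  have h : ∀ x y : E, ‖x‖ + ‖y‖ - ‖x - y‖ = (∫ t, |t| ∂gaussianReal 0 1)⁻¹ *
      ∫ g, |⟪x, g⟫| + |⟪y, g⟫| - |⟪x - y, g⟫| ∂stdGaussian E := by
    intro x y
    rw [integral_sub ((hint x).fun_add (hint y)) (hint _), integral_add (hint x) (hint y),
      integral_abs_inner_stdGaussian, integral_abs_inner_stdGaussian,
      integral_abs_inner_stdGaussian]
    field_simp
  simp_rw [h]
  refine IsPosSemidefKernel.const_mul (isPosSemidefKernel_integral (fun g => ?_) fun x y => ?_)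
    (inv_nonneg.2 hm.le)
  · simpa only [inner_sub_left] using isPosSemidefKernel_abs_add_abs_sub_abs_sub.comp (⟪·, g⟫)
  · exact ((hint x).add (hint y)).sub (hint _)

lemma isPosSemidefKernel_norm_add_norm_sub_norm_sub_div :
    IsPosSemidefKernel fun x y : E => (‖x‖ + ‖y‖ - ‖x - y‖) / (‖x‖ + ‖y‖) :=
  isPosSemidefKernel_norm_add_norm_sub_norm_sub.div_add norm_nonneg fun x y hxy => by
    linarith [norm_sub_le x y, norm_nonneg (x - y)]

end InnerProductSpace

theorem normalized_euclidean_similarity_positive_definite (n : ℕ)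
    (S : EuclideanSpace ℂ (Fin n) → EuclideanSpace ℂ (Fin n) → ℝ)
    (hS : ∀ x y, S x y =
      if x = 0 ∧ y = 0 then 0 else (‖x‖ + ‖y‖ - ‖x - y‖) / (‖x‖ + ‖y‖)) :
    IsPositiveDefiniteKernelR S := by
  -- the case `x = y = 0` is covered by `0 / 0 = 0`
  have hS' : S = fun x y => (‖x‖ + ‖y‖ - ‖x - y‖) / (‖x‖ + ‖y‖) := by
    ext x y
    rw [hS]
    split_ifs with h
    · simp [h.1, h.2]
    · rfl
  subst hS'
  refine isPosSemidefKernel_norm_add_norm_sub_norm_sub_div.isPositiveDefiniteKernelR fun x y => ?_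
  rw [norm_sub_rev, add_comm ‖x‖]
end
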